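/- For n ≥ 14, Σ_{k=1}^{n} (1/k)·binomial(n,k) ≤ 2^{n+1} / (n − 1 − 2/(n−5)). -/

import Mathlib

/-!
Pascal's rule together with `C(n, k) / (k + 1) = C(n + 1, k + 1) / (n + 1)` gives the recursion
`S (n + 1) = S n + (2 ^ (n + 1) - 1) / (n + 1)` for `S n = ∑ C(n, k) / k`. Writing
`D x = x - 1 - 2 / (x - 5)`, the bound `S n ≤ 2 ^ (n + 1) / D n` then propagates by induction from
`n = 14`, because `1 / D x + 1 / (x + 1) ≤ 2 / D (x + 1)` for `x ≥ 14`.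
-/

open Finset

noncomputable def sumChooseDiv (n : ℕ) : ℝ := ∑ k ∈ Icc 1 n, (1 / (k : ℝ)) * (n.choose k : ℝ)

lemma sumChooseDiv_eq_sum_range (n : ℕ) :
    sumChooseDiv n = ∑ k ∈ range n, (n.choose (k + 1) : ℝ) / (k + 1) := by
  rw [sumChooseDiv, ← Ico_add_one_right_eq_Icc, sum_Ico_eq_sum_range]
  refine sum_congr rfl fun k _ => ?_
  rw [add_comm 1 k, one_div_mul_eq_div]
  push_cast
  rfl

lemma sum_range_choose_succ (n : ℕ) :
    ∑ k ∈ range n, (n.choose (k + 1) : ℝ) = 2 ^ n - 1 := by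
  have h := sum_range_succ' (fun k => (n.choose k : ℝ)) n
  rw [← Nat.cast_sum, Nat.sum_range_choose] at h
  push_cast at h
  simp only [Nat.choose_zero_right, Nat.cast_one] at h
  linarith

lemma choose_succ_succ_div_succ (n k : ℕ) :
    ((n + 1).choose (k + 1) : ℝ) / (k + 1) =
      (n.choose (k + 1) : ℝ) / (k + 1) + ((n + 1).choose (k + 1) : ℝ) / (n + 1) := by
  have hpascal : ((n + 1).choose (k + 1) : ℝ) = n.choose k + n.choose (k + 1) := by
    exact_mod_cast Nat.choose_succ_succ n k
  have habsorb : ((n : ℝ) + 1) * n.choose k = (n + 1).choose (k + 1) * (k + 1) := by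
    exact_mod_cast Nat.add_one_mul_choose_eq n k
  field_simp
  linear_combination (n + 1 : ℝ) * hpascal + habsorb

lemma sumChooseDiv_succ (n : ℕ) :
    sumChooseDiv (n + 1) = sumChooseDiv n + (2 ^ (n + 1) - 1) / (n + 1) := by
  rw [sumChooseDiv_eq_sum_range, sumChooseDiv_eq_sum_range,
    sum_congr rfl fun k _ => choose_succ_succ_div_succ n k, sum_add_distrib,
    sum_range_succ, Nat.choose_succ_self, ← sum_div, sum_range_choose_succ]
  simp

/-- After clearing denominators the difference of the two sides is exactly `2 (x - 14)`. -/
lemma inv_bound_add_inv_succ_le (x : ℝ) (hx : 14 ≤ x) :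
    1 / (x - 1 - 2 / (x - 5)) + 1 / (x + 1) ≤ 2 / ((x + 1) - 1 - 2 / ((x + 1) - 5)) := by
  have hA : 0 < x ^ 2 - 6 * x + 3 := by nlinarith
  have hB : 0 < x ^ 2 - 4 * x - 2 := by nlinarith
  have hD : x - 1 - 2 / (x - 5) = (x ^ 2 - 6 * x + 3) / (x - 5) := by
    field_simp [show x - 5 ≠ 0 by linarith]
    ring
  have hD' : (x + 1) - 1 - 2 / ((x + 1) - 5) = (x ^ 2 - 4 * x - 2) / (x - 4) := by
    rw [show x + 1 - 5 = x - 4 by ring]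
    field_simp [show x - 4 ≠ 0 by linarith]
    ring
  rw [hD, hD', one_div_div, div_div_eq_mul_div, div_add_div _ _ hA.ne' (by linarith),
    div_le_div_iff₀ (by positivity) hB]
  linarith

theorem stmt9 (n : ℕ) (hn : 14 ≤ n) :
    ∑ k ∈ Finset.Icc 1 n, (1 / (k : ℝ)) * (n.choose k : ℝ) ≤
      2 ^ (n + 1) / ((n : ℝ) - 1 - 2 / ((n : ℝ) - 5)) := by
  induction n, hn using Nat.le_induction with
  | base => norm_num [sum_Icc_succ_top, Nat.choose]
  | succ n hn ih =>
    have hx : (14 : ℝ) ≤ n := by exact_mod_cast hn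
    rw [← sumChooseDiv] at ih ⊢
    push_cast
    calc sumChooseDiv (n + 1)
        = sumChooseDiv n + (2 ^ (n + 1) - 1) / (n + 1) := sumChooseDiv_succ n
      _ ≤ 2 ^ (n + 1) / (n - 1 - 2 / (n - 5)) + 2 ^ (n + 1) / (n + 1) := by
        gcongr
        linarith
      _ = 2 ^ (n + 1) * (1 / (n - 1 - 2 / (n - 5)) + 1 / (n + 1)) := by ring
      _ ≤ 2 ^ (n + 1) * (2 / ((n + 1) - 1 - 2 / ((n + 1) - 5))) := by
        gcongr
        exact inv_bound_add_inv_succ_le n hx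
      _ = 2 ^ (n + 1 + 1) / ((n + 1) - 1 - 2 / ((n + 1) - 5)) := by ring
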